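/- arXiv:1805.02762 — 2 statements merged into one kernel-verified Lean document; each statement's English description precedes it below -/
import Mathlib

section
/- For the directed-ring dynamics β̇ᵢ = δ(β_{i+1 mod n} - βᵢ) with δ > 0 and ∑ᵢ βᵢ(0) = 2π, every component βᵢ(t) converges to 2π/n as t → ∞. -/
/-!
The mean of `β` is conserved, so `e = β - 2π/n` has mean zero at all times. Along the flow,
`V = ∑ eᵢ²` satisfies `V' = -δ ∑ (e_{i+1} - eᵢ)²`. For mean-zero `e` each `|eᵢ|` is bounded by
the total variation `∑ |e_{i+1} - eᵢ|` around the ring, which gives the discrete Poincaré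
inequality `∑ eᵢ² ≤ n² ∑ (e_{i+1} - eᵢ)²`; hence `V' ≤ -(δ/n²) V` and `V` decays exponentially.
-/

open Finset Filter Real Topology

lemma Fin.mk_add_one_mod_eq_add_one {n : ℕ} [NeZero n] (i : Fin n) (h : (i.val + 1) % n < n) :
    (⟨(i.val + 1) % n, h⟩ : Fin n) = i + 1 := by
  ext
  simp [Fin.val_add]

lemma Fintype.sum_comp_add_right {G M : Type*} [AddGroup G] [Fintype G] [AddCommMonoid M]
    (f : G → M) (a : G) : ∑ i, f (i + a) = ∑ i, f i :=
  Equiv.sum_comp (Equiv.addRight a) f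

section CyclicDifferences

variable {n : ℕ} [NeZero n]

open Fin.NatCast

lemma Fin.sub_eq_sum_range_sub_add_one {G : Type*} [AddCommGroup G] (e : Fin n → G)
    (j : Fin n) (m : ℕ) :
    e (j + m) - e j = ∑ k ∈ range m, (e (j + k + 1) - e (j + k)) := by
  simpa [Nat.cast_succ, add_assoc] using (sum_range_sub (fun k : ℕ => e (j + k)) m).symm

lemma abs_sub_le_sum_abs_sub_add_one (e : Fin n → ℝ) (i j : Fin n) :
    |e i - e j| ≤ ∑ k, |e (k + 1) - e k| := by
  obtain ⟨m, hm, rfl⟩ : ∃ m < n, i = j + m := ⟨(i - j).val, (i - j).isLt, by simp⟩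
  rw [Fin.sub_eq_sum_range_sub_add_one]
  calc _ ≤ ∑ k ∈ range m, |e (j + k + 1) - e (j + k)| := abs_sum_le_sum_abs _ _
    _ ≤ ∑ k ∈ range n, |e (j + k + 1) - e (j + k)| :=
      sum_le_sum_of_subset_of_nonneg (range_subset_range.2 hm.le) fun _ _ _ => abs_nonneg _
    _ = ∑ k, |e (k + 1) - e k| := by
      rw [← Fin.sum_univ_eq_sum_range (fun k => |e (j + k + 1) - e (j + k)|)]
      simp only [Fin.cast_val_eq_self]
      exact Equiv.sum_comp (Equiv.addLeft j) fun k => |e (k + 1) - e k|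

lemma abs_le_sum_abs_sub_add_one_of_sum_eq_zero (e : Fin n → ℝ) (he : ∑ i, e i = 0)
    (i : Fin n) : |e i| ≤ ∑ k, |e (k + 1) - e k| := by
  have hn : (0 : ℝ) < n := by exact_mod_cast NeZero.pos n
  have hsum : (n : ℝ) * e i = ∑ j, (e i - e j) := by simp [sum_sub_distrib, he]
  refine le_of_mul_le_mul_left ?_ hn
  calc (n : ℝ) * |e i| = |∑ j, (e i - e j)| := by rw [← hsum, abs_mul, abs_of_pos hn]
    _ ≤ ∑ j, |e i - e j| := abs_sum_le_sum_abs _ _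
    _ ≤ ∑ _j : Fin n, ∑ k, |e (k + 1) - e k| :=
      sum_le_sum fun j _ => abs_sub_le_sum_abs_sub_add_one e i j
    _ = n * ∑ k, |e (k + 1) - e k| := by simp

lemma sum_sq_le_sq_mul_sum_sq_sub_add_one_of_sum_eq_zero (e : Fin n → ℝ)
    (he : ∑ i, e i = 0) : ∑ i, e i ^ 2 ≤ (n : ℝ) ^ 2 * ∑ i, (e (i + 1) - e i) ^ 2 := by
  set T := ∑ k, |e (k + 1) - e k|
  have hT : T ^ 2 ≤ n * ∑ i, (e (i + 1) - e i) ^ 2 := by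
    simpa [sq_abs] using sq_sum_le_card_mul_sum_sq (s := univ) (f := fun i => |e (i + 1) - e i|)
  calc ∑ i, e i ^ 2 ≤ ∑ _i : Fin n, T ^ 2 := sum_le_sum fun i _ =>
        sq_le_sq' (neg_le_of_abs_le (abs_le_sum_abs_sub_add_one_of_sum_eq_zero e he i))
          (le_of_abs_le (abs_le_sum_abs_sub_add_one_of_sum_eq_zero e he i))
    _ = n * T ^ 2 := by simp
    _ ≤ n * (n * ∑ i, (e (i + 1) - e i) ^ 2) := by gcongr
    _ = (n : ℝ) ^ 2 * ∑ i, (e (i + 1) - e i) ^ 2 := by ring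

end CyclicDifferences

lemma antitone_mul_exp_of_hasDerivAt_le_neg_mul {V V' : ℝ → ℝ} {κ : ℝ}
    (hV : ∀ t, HasDerivAt V (V' t) t) (hle : ∀ t, V' t ≤ -κ * V t) :
    Antitone fun t => V t * exp (κ * t) := by
  have hd : ∀ t, HasDerivAt (fun t => V t * exp (κ * t))
      (V' t * exp (κ * t) + V t * (exp (κ * t) * κ)) t := fun t => by
    simpa using (hV t).fun_mul ((hasDerivAt_id t).const_mul κ).exp
  refine antitone_of_deriv_nonpos (fun t => (hd t).differentiableAt) fun t => ?_
  rw [(hd t).deriv]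
  nlinarith [hle t, exp_pos (κ * t)]

lemma tendsto_zero_of_hasDerivAt_le_neg_mul {V V' : ℝ → ℝ} {κ : ℝ} (hκ : 0 < κ)
    (hV : ∀ t, HasDerivAt V (V' t) t) (hle : ∀ t, V' t ≤ -κ * V t) (hnonneg : ∀ t, 0 ≤ V t) :
    Tendsto V atTop (𝓝 0) := by
  have hbound : ∀ t ≥ (0 : ℝ), V t ≤ V 0 * exp (-(κ * t)) := fun t ht => by
    have := antitone_mul_exp_of_hasDerivAt_le_neg_mul hV hle ht
    rw [exp_neg, ← div_eq_mul_inv, le_div_iff₀ (exp_pos _)]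
    simpa using this
  have hexp : Tendsto (fun t => V 0 * exp (-(κ * t))) atTop (𝓝 0) := by
    simpa using (tendsto_exp_neg_atTop_nhds_zero.comp
      (tendsto_id.const_mul_atTop hκ)).const_mul (V 0)
  exact tendsto_of_tendsto_of_tendsto_of_le_of_le' tendsto_const_nhds hexp
    (Eventually.of_forall hnonneg) (eventually_atTop.2 ⟨0, hbound⟩)

lemma tendsto_of_tendsto_sum_sq_sub {α ι : Type*} [Fintype ι] {l : Filter α}
    {f : α → ι → ℝ} {c : ℝ} (h : Tendsto (fun t => ∑ i, (f t i - c) ^ 2) l (𝓝 0)) (i : ι) :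
    Tendsto (fun t => f t i) l (𝓝 c) := by
  rw [tendsto_iff_norm_sub_tendsto_zero]
  refine squeeze_zero (fun _ => norm_nonneg _) (fun t => abs_le_sqrt ?_) (by simpa using h.sqrt)
  exact single_le_sum (f := fun j => (f t j - c) ^ 2) (fun _ _ => sq_nonneg _) (mem_univ i)

def IsRingFlow {n : ℕ} [NeZero n] (δ : ℝ) (β : ℝ → Fin n → ℝ) : Prop :=
  ∀ i t, HasDerivAt (fun s => β s i) (δ * (β t (i + 1) - β t i)) t

namespace IsRingFlow

variable {n : ℕ} [NeZero n] {δ : ℝ} {β : ℝ → Fin n → ℝ}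

lemma sum_eq (hβ : IsRingFlow δ β) (t : ℝ) : ∑ i, β t i = ∑ i, β 0 i := by
  have hd : ∀ t, HasDerivAt (fun s => ∑ i, β s i) 0 t := fun t => by
    have h := HasDerivAt.fun_sum fun i (_ : i ∈ univ) => hβ i t
    rwa [← mul_sum, sum_sub_distrib, Fintype.sum_comp_add_right (β t), sub_self, mul_zero] at h
  exact is_const_of_deriv_eq_zero (fun s => (hd s).differentiableAt) (fun s => (hd s).deriv) t 0

lemma hasDerivAt_sum_sq_sub (hβ : IsRingFlow δ β) (c t : ℝ) :
    HasDerivAt (fun s => ∑ i, (β s i - c) ^ 2) (-δ * ∑ i, (β t (i + 1) - β t i) ^ 2) t := by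
  have h := HasDerivAt.fun_sum fun i (_ : i ∈ univ) => ((hβ i t).sub_const c).fun_pow 2
  have hcyc := Fintype.sum_comp_add_right (fun i => (β t i - c) ^ 2) 1
  -- `2 (x - c) (y - x) = (y - c)² - (x - c)² - (y - x)²`, and the first two terms cancel cyclically
  have hterm : ∀ i, ((2 : ℕ) : ℝ) * (β t i - c) ^ (2 - 1) * (δ * (β t (i + 1) - β t i)) =
      δ * ((β t (i + 1) - c) ^ 2 - (β t i - c) ^ 2) - δ * (β t (i + 1) - β t i) ^ 2 :=
    fun i => by ring
  simpa only [hterm, sum_sub_distrib, ← mul_sum, hcyc, sub_self, mul_zero, zero_sub, neg_mul]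
    using h

theorem tendsto (hδ : 0 < δ) (hβ : IsRingFlow δ β) {c : ℝ}
    (hc : ∑ i, β 0 i = n * c) (i : Fin n) :
    Tendsto (fun t => β t i) atTop (𝓝 c) := by
  have hn : (0 : ℝ) < n := by exact_mod_cast NeZero.pos n
  have hmean : ∀ t, ∑ i, (β t i - c) = 0 := fun t => by
    simp [sum_sub_distrib, hβ.sum_eq t, hc]
  refine tendsto_of_tendsto_sum_sq_sub (tendsto_zero_of_hasDerivAt_le_neg_mul (κ := δ / n ^ 2)
    (by positivity) (hβ.hasDerivAt_sum_sq_sub c) (fun t => ?_)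
    (fun t => sum_nonneg fun _ _ => sq_nonneg _)) i
  have hpoinc := sum_sq_le_sq_mul_sum_sq_sub_add_one_of_sum_eq_zero _ (hmean t)
  simp only [sub_sub_sub_cancel_right] at hpoinc
  calc -δ * ∑ i, (β t (i + 1) - β t i) ^ 2
      = -(δ / n ^ 2) * (n ^ 2 * ∑ i, (β t (i + 1) - β t i) ^ 2) := by field_simp
    _ ≤ -(δ / n ^ 2) * ∑ i, (β t i - c) ^ 2 :=
      mul_le_mul_of_nonpos_left hpoinc (neg_nonpos.2 (by positivity))

end IsRingFlow

theorem ring_system_consensus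
    (n : ℕ) (hn : 2 ≤ n) (δ : ℝ) (hδ : 0 < δ)
    (β : ℝ → Fin n → ℝ)
    (hode : ∀ (i : Fin n) (t : ℝ),
      HasDerivAt (fun s => β s i)
        (δ * (β t ⟨(i.val + 1) % n, Nat.mod_lt _ (by omega)⟩ - β t i)) t)
    (hsum : ∑ i, β 0 i = 2 * Real.pi) :
    ∀ i : Fin n, Filter.Tendsto (fun t => β t i) Filter.atTop
      (nhds (2 * Real.pi / n)) := by
  have : NeZero n := ⟨by omega⟩
  refine IsRingFlow.tendsto hδ
    (fun i t => by simpa only [Fin.mk_add_one_mod_eq_add_one] using hode i t) ?_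
  rw [hsum, mul_div_cancel₀ _ (by positivity)]
end

section
/- With control u = ċ̂ + (D̂ - r̂ - ṙ̂)ψ + βD̂ Eψ, where ψ = (ĉ - p)/D̂, D̂ = ‖ĉ - p‖ > 0, and E the rotation by -π/2, the function W = D̂ - r̂ satisfies Ẇ = -W along trajectories ṗ = u (taking δ = 1). -/
/-! With `x = ĉ - p`, the control law gives `ẋ = -(W - ṙ̂) ψ - β D̂ Eψ`. Since `Eψ ⊥ ψ` and the
norm of a curve only sees the radial part of its velocity, `D̂' = -(W - ṙ̂)`, hence `Ẇ = -W`. -/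

open scoped RealInnerProductSpace

section NormDerivative

variable {F : Type*} [NormedAddCommGroup F] [InnerProductSpace ℝ F]

theorem real_inner_inv_norm_smul_self (x : F) : ⟪x, ‖x‖⁻¹ • x⟫ = ‖x‖ := by
  rw [real_inner_smul_self_right]
  rcases eq_or_ne ‖x‖ 0 with hx | hx
  · simp [hx]
  · field_simp

theorem HasDerivAt.norm {f : ℝ → F} {f' : F} {t : ℝ} (hf : HasDerivAt f f' t) (hft : f t ≠ 0) :
    HasDerivAt (fun s => ‖f s‖) (⟪f t, f'⟫ / ‖f t‖) t := by
  have hsqrt := hf.norm_sq.sqrt (by positivity)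
  simp only [Real.sqrt_sq (norm_nonneg _)] at hsqrt
  convert hsqrt using 1
  field_simp

theorem HasDerivAt.norm_of_radial_add_orthogonal {f : ℝ → F} {n : F} {a t : ℝ}
    (hf : HasDerivAt f (a • (‖f t‖⁻¹ • f t) + n) t) (hft : f t ≠ 0) (hn : ⟪f t, n⟫ = 0) :
    HasDerivAt (fun s => ‖f s‖) a t := by
  convert hf.norm hft using 1
  rw [inner_add_right, real_inner_smul_right, real_inner_inv_norm_smul_self, hn, add_zero,
    mul_div_cancel_right₀ _ (norm_ne_zero_iff.mpr hft)]

end NormDerivative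

theorem EuclideanSpace.inner_eq_zero_of_quarter_turn {v w : EuclideanSpace ℝ (Fin 2)}
    (h0 : w 0 = v 1) (h1 : w 1 = -v 0) : ⟪v, w⟫ = 0 := by
  simp only [PiLp.inner_apply, Fin.sum_univ_two, RCLike.inner_apply, conj_trivial, h0, h1]
  ring

theorem control_law_W_dynamics
    (p chat : ℝ → EuclideanSpace ℝ (Fin 2)) (rhat : ℝ → ℝ) (β : ℝ)
    (hchat : Differentiable ℝ chat) (hrhat : Differentiable ℝ rhat)
    (hDpos : ∀ t, 0 < ‖chat t - p t‖)
    (ψ : ℝ → EuclideanSpace ℝ (Fin 2))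
    (hψ : ∀ t, ψ t = ‖chat t - p t‖⁻¹ • (chat t - p t))
    (Eψ : ℝ → EuclideanSpace ℝ (Fin 2))
    (hE0 : ∀ t, Eψ t 0 = ψ t 1) (hE1 : ∀ t, Eψ t 1 = -(ψ t 0))
    (hp : ∀ t, HasDerivAt p
      (deriv chat t + (‖chat t - p t‖ - rhat t - deriv rhat t) • ψ t
        + (β * ‖chat t - p t‖) • Eψ t) t) :
    ∀ t, HasDerivAt (fun s => ‖chat s - p s‖ - rhat s)
      (-(‖chat t - p t‖ - rhat t)) t := by
  intro t
  set D := ‖chat t - p t‖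
  have hD : D ≠ 0 := (hDpos t).ne'
  have hradial : chat t - p t = D • ψ t := by
    rw [hψ t, smul_smul, mul_inv_cancel₀ hD, one_smul]
  have horth : ⟪chat t - p t, (-(β * D)) • Eψ t⟫ = 0 := by
    rw [real_inner_smul_right, hradial, real_inner_smul_left,
      EuclideanSpace.inner_eq_zero_of_quarter_turn (hE0 t) (hE1 t)]
    ring
  have hvel : HasDerivAt (fun s => chat s - p s)
      ((-(D - rhat t - deriv rhat t)) • (D⁻¹ • (chat t - p t)) + (-(β * D)) • Eψ t) t := by
    refine ((hchat t).hasDerivAt.sub (hp t)).congr_deriv ?_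
    rw [← hψ t]
    module
  have hdist := hvel.norm_of_radial_add_orthogonal (norm_pos_iff.mp (hDpos t)) horth
  exact (hdist.sub (hrhat t).hasDerivAt).congr_deriv (by ring)
end
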